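/- arXiv:1707.07441 — 5 statements merged into one kernel-verified Lean document; each statement's English description precedes it below -/
import Mathlib

section
/- Let p and q be paths with p < q in the lexicographic order and suppose the open interval ]p, q[ is empty, i.e. no path r satisfies p < r < q. Then either there exist i : Fin N and w : List Bool such that p = (i, w ++ [false] ++ true^∞) and q = (i, w ++ [true] ++ false^∞), or there exists i : Fin N with i + 1 ≤ N − 1 such that p = (i, true^∞) and q = (i+1, false^∞). In particular both p and q are rational paths (their Boolean sequences are eventually constant). -/
noncomputable section
open Filter Topology

/-- Lexicographic strict order on infinite paths: `(i, s) < (j, t)` iff `i < j`, or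
`i = j` and there is `n` with `s k = t k` for `k < n`, `s n = false` and `t n = true`. -/
def PathLt {N : ℕ} (p q : Fin N × (ℕ → Bool)) : Prop :=
  p.1 < q.1 ∨ (p.1 = q.1 ∧ ∃ n : ℕ, (∀ k < n, p.2 k = q.2 k) ∧ p.2 n = false ∧ q.2 n = true)

/-- The constant Boolean sequence `c^∞`. -/
def constSeq (c : Bool) : ℕ → Bool := fun _ => c

/-- The Boolean sequence `w ++ [b] ++ c^∞`: it begins with the word `w`, then `b`,
then is constantly `c`. -/
def extendSeq (w : List Bool) (b c : Bool) : ℕ → Bool := fun n =>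
  if h : n < w.length then w.get ⟨n, h⟩ else if n = w.length then b else c

/-- A path is rational iff its Boolean sequence is eventually constant. -/
def RationalPath {N : ℕ} (p : Fin N × (ℕ → Bool)) : Prop :=
  ∃ (c : Bool) (m : ℕ), ∀ n ≥ m, p.2 n = c

/-- **Adjacent paths bound a complementary region.** If `p < q` and no path lies
strictly between them, then either `p = (i, w ++ [false] ++ true^∞)` and
`q = (i, w ++ [true] ++ false^∞)` for some edge `(i, w)`, or `p = (i, true^∞)` and
`q = (i+1, false^∞)` with `i + 1 ≤ N - 1`. In particular `p` and `q` are rational. -/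
theorem adjacent_paths_are_boundary (N : ℕ) (hN : 1 ≤ N)
    (p q : Fin N × (ℕ → Bool)) (hpq : PathLt p q)
    (hempty : ¬ ∃ r : Fin N × (ℕ → Bool), PathLt p r ∧ PathLt r q) :
    ((∃ (i : Fin N) (w : List Bool),
        p = (i, extendSeq w false true) ∧ q = (i, extendSeq w true false)) ∨
     (∃ i j : Fin N, (j : ℕ) = (i : ℕ) + 1 ∧
        p = (i, constSeq true) ∧ q = (j, constSeq false))) ∧
    RationalPath p ∧ RationalPath q := by
  classical
  rcases hpq with h1 | ⟨heq, n, hagree, hpn, hqn⟩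
  · -- case p.1 < q.1
    have hp : ∀ k, p.2 k = true := by
      intro k
      by_contra hk
      have hk' : p.2 k = false := by simpa using hk
      exact hempty ⟨(p.1, fun m => if m < k then p.2 m else true),
        Or.inr ⟨rfl, k, fun m hm => by simp [hm], hk', by simp⟩,
        Or.inl h1⟩
    have hq : ∀ k, q.2 k = false := by
      intro k
      by_contra hk
      have hk' : q.2 k = true := by simpa using hk
      exact hempty ⟨(q.1, fun m => if m < k then q.2 m else false),
        Or.inl h1,
        Or.inr ⟨rfl, k, fun m hm => by simp [hm], by simp, hk'⟩⟩
    have hsucc : (q.1 : ℕ) = (p.1 : ℕ) + 1 := by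
      by_contra hne
      have hle : (p.1 : ℕ) + 1 ≤ (q.1 : ℕ) := h1
      have hlt : (p.1 : ℕ) + 1 < (q.1 : ℕ) := lt_of_le_of_ne hle (Ne.symm hne)
      exact hempty ⟨(⟨(p.1 : ℕ) + 1, lt_trans hlt q.1.isLt⟩, fun _ => false),
        Or.inl (by simp [Fin.lt_def]), Or.inl (by simpa [Fin.lt_def] using hlt)⟩
    refine ⟨Or.inr ⟨p.1, q.1, hsucc, ?_, ?_⟩, ⟨true, 0, fun k _ => hp k⟩,
      ⟨false, 0, fun k _ => hq k⟩⟩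
    · exact Prod.ext rfl (funext fun k => hp k)
    · exact Prod.ext rfl (funext fun k => hq k)
  · -- case p.1 = q.1
    have hp : ∀ k, n < k → p.2 k = true := by
      intro k hnk
      by_contra hk
      have hk' : p.2 k = false := by simpa using hk
      refine hempty ⟨(p.1, fun m => if m < k then p.2 m else true),
        Or.inr ⟨rfl, k, fun m hm => by simp [hm], hk', by simp⟩,
        Or.inr ⟨heq, n, ?_, ?_, hqn⟩⟩
      · intro m hm
        simp only [lt_trans hm hnk, if_pos]
        exact hagree m hm
      · simpa [hnk] using hpn
    have hq : ∀ k, n < k → q.2 k = false := by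
      intro k hnk
      by_contra hk
      have hk' : q.2 k = true := by simpa using hk
      refine hempty ⟨(q.1, fun m => if m < k then q.2 m else false),
        Or.inr ⟨heq, n, ?_, hpn, ?_⟩,
        Or.inr ⟨rfl, k, fun m hm => by simp [hm], by simp, hk'⟩⟩
      · intro m hm
        simp only [lt_trans hm hnk, if_pos]
        exact hagree m hm
      · simpa [hnk] using hqn
    set w : List Bool := List.ofFn (fun j : Fin n => p.2 j) with hw
    have hwlen : w.length = n := by simp [hw]
    have hpe : p.2 = extendSeq w false true := by
      funext k
      unfold extendSeq
      rcases lt_trichotomy k n with h | h | h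
      · rw [dif_pos (by omega : k < w.length)]
        simp [hw, List.get_ofFn]
      · subst h
        rw [dif_neg (by omega), if_pos hwlen.symm]
        exact hpn
      · rw [dif_neg (by omega), if_neg (by omega)]
        exact hp k h
    have hqe : q.2 = extendSeq w true false := by
      funext k
      unfold extendSeq
      rcases lt_trichotomy k n with h | h | h
      · rw [dif_pos (by omega : k < w.length)]
        simp [hw, List.get_ofFn, hagree k h]
      · subst h
        rw [dif_neg (by omega), if_pos hwlen.symm]
        exact hqn
      · rw [dif_neg (by omega), if_neg (by omega)]
        exact hq k h
    refine ⟨Or.inl ⟨p.1, w, Prod.ext rfl hpe, Prod.ext heq.symm hqe⟩,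
      ⟨true, n + 1, fun k hk => hp k (by omega)⟩,
      ⟨false, n + 1, fun k hk => hq k (by omega)⟩⟩
end
end

section
/- (Gap inequality.) For every positive harmonic 1-form Φ, the sum of the gaps over all complementary regions is at most half the boundary value: ∑_{i : Fin N} ∑_{w : List Bool} Gap_Φ(i,w) + (1/2) ∑_{i : Fin N} ( lim_n Φ i (List.replicate n true) + lim_n Φ i (List.replicate n false) ) ≤ ∂Φ / 2, where the double sum over (i, w) is a tsum over the countable set Fin N × List Bool (all summands are nonnegative). -/
noncomputable section
open Filter Topology

/-- The gap of the complementary region labelled by the edge `(i, w)`: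
`Gap_Φ(i,w) = ( lim_n Φ i (w ++ [false] ++ true^n) + lim_n Φ i (w ++ [true] ++ false^n) ) / 2`.
These limits exist since the relevant sequences are positive and decreasing. -/
def GapPhi {N : ℕ} (Φ : Fin N → List Bool → ℝ) (i : Fin N) (w : List Bool) : ℝ :=
  (limUnder atTop (fun n : ℕ => Φ i (w ++ [false] ++ List.replicate n true)) +
   limUnder atTop (fun n : ℕ => Φ i (w ++ [true] ++ List.replicate n false))) / 2

namespace GapAux

variable {N : ℕ}

/-- The limit of `Φ i (v ++ b^n)` as `n → ∞`, realized as an infimum. -/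
def L (Φ : Fin N → List Bool → ℝ) (i : Fin N) (v : List Bool) (b : Bool) : ℝ :=
  ⨅ n : ℕ, Φ i (v ++ List.replicate n b)

section

variable (Φ : Fin N → List Bool → ℝ)
  (hpos : ∀ (i : Fin N) (w : List Bool), 0 < Φ i w)
  (hharm : ∀ (i : Fin N) (w : List Bool), Φ i w = Φ i (w ++ [false]) + Φ i (w ++ [true]))

include hpos hharm

lemma step (i : Fin N) (w : List Bool) (b : Bool) : Φ i (w ++ [b]) ≤ Φ i w := by
  have h := hharm i w
  have h0 := hpos i (w ++ [false])
  have h1 := hpos i (w ++ [true])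
  cases b <;> linarith

lemma anti (i : Fin N) (v : List Bool) (b : Bool) :
    Antitone fun n : ℕ => Φ i (v ++ List.replicate n b) := by
  apply antitone_nat_of_succ_le
  intro n
  have h := step Φ hpos hharm i (v ++ List.replicate n b) b
  simpa [List.replicate_succ', ← List.append_assoc] using h

lemma bdd (i : Fin N) (v : List Bool) (b : Bool) :
    BddBelow (Set.range fun n : ℕ => Φ i (v ++ List.replicate n b)) := by
  refine ⟨0, ?_⟩
  rintro x ⟨n, rfl⟩
  exact (hpos _ _).le

lemma L_nonneg (i : Fin N) (v : List Bool) (b : Bool) : 0 ≤ L Φ i v b :=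
  le_ciInf fun n => (hpos _ _).le

lemma L_le (i : Fin N) (v : List Bool) (b : Bool) (n : ℕ) :
    L Φ i v b ≤ Φ i (v ++ List.replicate n b) :=
  ciInf_le (bdd Φ hpos hharm i v b) n

lemma L_le_one (i : Fin N) (v : List Bool) (b : Bool) :
    L Φ i v b ≤ Φ i (v ++ [b]) := by
  have h := L_le Φ hpos hharm i v b 1
  simpa using h

lemma lim_eq (i : Fin N) (v : List Bool) (b : Bool) :
    limUnder atTop (fun n : ℕ => Φ i (v ++ List.replicate n b)) = L Φ i v b :=
  (tendsto_atTop_ciInf (anti Φ hpos hharm i v b) (bdd Φ hpos hharm i v b)).limUnder_eq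

lemma L_shift (i : Fin N) (v : List Bool) (b : Bool) :
    L Φ i (v ++ [b]) b = L Φ i v b := by
  have hfun : ∀ n : ℕ, (v ++ [b]) ++ List.replicate n b = v ++ List.replicate (n + 1) b := by
    intro n; simp [List.replicate_succ]
  apply le_antisymm
  · refine le_ciInf fun n => ?_
    calc L Φ i (v ++ [b]) b ≤ Φ i ((v ++ [b]) ++ List.replicate n b) :=
          L_le Φ hpos hharm i (v ++ [b]) b n
      _ = Φ i (v ++ List.replicate (n + 1) b) := by rw [hfun]
      _ ≤ Φ i (v ++ List.replicate n b) := anti Φ hpos hharm i v b (Nat.le_succ n)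
  · refine le_ciInf fun n => ?_
    calc L Φ i v b ≤ Φ i (v ++ List.replicate (n + 1) b) := L_le Φ hpos hharm i v b (n + 1)
      _ = Φ i ((v ++ [b]) ++ List.replicate n b) := by rw [hfun]

lemma gap_eq (i : Fin N) (w : List Bool) :
    GapPhi Φ i w = (L Φ i (w ++ [false]) true + L Φ i (w ++ [true]) false) / 2 := by
  unfold GapPhi
  have e1 : (fun n : ℕ => Φ i (w ++ [false] ++ List.replicate n true)) =
      fun n : ℕ => Φ i ((w ++ [false]) ++ List.replicate n true) := by
    funext n; simp
  have e2 : (fun n : ℕ => Φ i (w ++ [true] ++ List.replicate n false)) =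
      fun n : ℕ => Φ i ((w ++ [true]) ++ List.replicate n false) := by
    funext n; simp
  rw [e1, e2, lim_eq Φ hpos hharm, lim_eq Φ hpos hharm]

lemma gap_nonneg (i : Fin N) (w : List Bool) : 0 ≤ GapPhi Φ i w := by
  rw [gap_eq Φ hpos hharm]
  have h1 := L_nonneg Φ hpos hharm i (w ++ [false]) true
  have h2 := L_nonneg Φ hpos hharm i (w ++ [true]) false
  linarith

end

/-- The finset of words of length `< m`. -/
def W : ℕ → Finset (List Bool)
  | 0 => ∅
  | m + 1 => insert [] ((W m).image (List.cons false) ∪ (W m).image (List.cons true))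

lemma mem_W : ∀ (m : ℕ) (u : List Bool), u ∈ W m ↔ u.length < m := by
  intro m
  induction m with
  | zero => intro u; simp [W]
  | succ m ih =>
    intro u
    cases u with
    | nil => simp [W]
    | cons b t =>
      simp only [W, Finset.mem_insert, Finset.mem_union, Finset.mem_image]
      constructor
      · rintro (h | ⟨s, hs, h⟩ | ⟨s, hs, h⟩)
        · simp at h
        all_goals
          injection h with hb ht
          subst hb; subst ht
          simpa [Nat.succ_lt_succ_iff] using (ih _).mp hs
      · intro h
        have ht : t ∈ W m := (ih t).mpr (by simpa [Nat.succ_lt_succ_iff] using h)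
        cases b
        · exact Or.inr (Or.inl ⟨t, ht, rfl⟩)
        · exact Or.inr (Or.inr ⟨t, ht, rfl⟩)

section

variable (Φ : Fin N → List Bool → ℝ)
  (hpos : ∀ (i : Fin N) (w : List Bool), 0 < Φ i w)
  (hharm : ∀ (i : Fin N) (w : List Bool), Φ i w = Φ i (w ++ [false]) + Φ i (w ++ [true]))

include hpos hharm

lemma key : ∀ (m : ℕ) (i : Fin N) (w : List Bool),
    (∑ u ∈ W m, (L Φ i ((w ++ u) ++ [false]) true + L Φ i ((w ++ u) ++ [true]) false)) +
      (L Φ i w true + L Φ i w false) ≤ Φ i w := by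
  intro m
  induction m with
  | zero =>
    intro i w
    have h1 := L_le_one Φ hpos hharm i w true
    have h0 := L_le_one Φ hpos hharm i w false
    have hh := hharm i w
    simp only [W, Finset.sum_empty, zero_add]
    linarith
  | succ m ih =>
    intro i w
    have hnotmem : ([] : List Bool) ∉
        (W m).image (List.cons false) ∪ (W m).image (List.cons true) := by simp
    have hdisj : Disjoint ((W m).image (List.cons false)) ((W m).image (List.cons true)) := by
      simp only [Finset.disjoint_left, Finset.mem_image]
      rintro x ⟨s, _, rfl⟩ ⟨t, _, h⟩
      exact Bool.noConfusion (List.head_eq_of_cons_eq h.symm)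
    have hinj : ∀ b : Bool, Set.InjOn (List.cons b) (W m) := by
      intro b x _ y _ h; exact List.tail_eq_of_cons_eq h
    rw [show W (m + 1) = insert [] ((W m).image (List.cons false) ∪ (W m).image (List.cons true))
        from rfl,
      Finset.sum_insert hnotmem, Finset.sum_union hdisj,
      Finset.sum_image (hinj false), Finset.sum_image (hinj true)]
    have I0 := ih i (w ++ [false])
    have I1 := ih i (w ++ [true])
    simp only [List.append_assoc, List.cons_append, List.nil_append] at I0 I1 ⊢
    have s0 := L_shift Φ hpos hharm i w false
    have s1 := L_shift Φ hpos hharm i w true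
    have hh := hharm i w
    linarith

lemma finset_bound (F : Finset (Fin N × List Bool)) :
    ∑ x ∈ F, GapPhi Φ x.1 x.2 ≤
      (∑ i, Φ i []) / 2 - (1 / 2) * ∑ i, (L Φ i [] true + L Φ i [] false) := by
  set m : ℕ := (F.sup fun x => x.2.length) + 1 with hm
  have hsub : F ⊆ Finset.univ ×ˢ W m := by
    intro x hx
    rw [Finset.mem_product]
    refine ⟨Finset.mem_univ _, (mem_W m x.2).mpr ?_⟩
    exact Nat.lt_succ_of_le (Finset.le_sup (f := fun x : Fin N × List Bool => x.2.length) hx)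
  have h1 : ∑ x ∈ F, GapPhi Φ x.1 x.2 ≤ ∑ x ∈ Finset.univ ×ˢ W m, GapPhi Φ x.1 x.2 :=
    Finset.sum_le_sum_of_subset_of_nonneg hsub
      (fun x _ _ => gap_nonneg Φ hpos hharm x.1 x.2)
  have h2 : ∑ x ∈ Finset.univ ×ˢ W m, GapPhi Φ x.1 x.2 =
      ∑ i : Fin N, ∑ u ∈ W m, GapPhi Φ i u := by rw [Finset.sum_product]
  have hi : ∀ i : Fin N, ∑ u ∈ W m, GapPhi Φ i u ≤
      (Φ i [] - (L Φ i [] true + L Φ i [] false)) / 2 := by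
    intro i
    have hk := key Φ hpos hharm m i []
    simp only [List.nil_append] at hk
    have : ∑ u ∈ W m, GapPhi Φ i u =
        (∑ u ∈ W m, (L Φ i (u ++ [false]) true + L Φ i (u ++ [true]) false)) / 2 := by
      rw [Finset.sum_div]
      exact Finset.sum_congr rfl fun u _ => gap_eq Φ hpos hharm i u
    rw [this]
    linarith
  have h3 : ∑ i : Fin N, ∑ u ∈ W m, GapPhi Φ i u ≤
      ∑ i : Fin N, (Φ i [] - (L Φ i [] true + L Φ i [] false)) / 2 :=
    Finset.sum_le_sum fun i _ => hi i
  have h4 : ∑ i : Fin N, (Φ i [] - (L Φ i [] true + L Φ i [] false)) / 2 =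
      (∑ i, Φ i []) / 2 - (1 / 2) * ∑ i, (L Φ i [] true + L Φ i [] false) := by
    rw [Finset.sum_div, Finset.mul_sum, ← Finset.sum_sub_distrib]
    exact Finset.sum_congr rfl fun i _ => by ring
  rw [h2] at h1
  linarith [h1, h3, h4.le, h4.ge]

end

end GapAux

/-- **Gap inequality.** For every positive harmonic 1-form `Φ`, the total gap — the sum
over all edge-labelled complementary regions of `Gap_Φ`, plus the contribution of the
`N` root regions — is at most half the boundary value `∂Φ = ∑ i, Φ i []`. -/
theorem gap_inequality (N : ℕ) (hN : 1 ≤ N) (Φ : Fin N → List Bool → ℝ)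
    (hpos : ∀ (i : Fin N) (w : List Bool), 0 < Φ i w)
    (hharm : ∀ (i : Fin N) (w : List Bool), Φ i w = Φ i (w ++ [false]) + Φ i (w ++ [true])) :
    (∑' x : Fin N × List Bool, GapPhi Φ x.1 x.2) +
      (1/2) * ∑ i : Fin N,
        (limUnder atTop (fun n : ℕ => Φ i (List.replicate n true)) +
         limUnder atTop (fun n : ℕ => Φ i (List.replicate n false)))
    ≤ (∑ i : Fin N, Φ i []) / 2 := by
  classical
  have hbound : ∀ F : Finset (Fin N × List Bool), ∑ x ∈ F, GapPhi Φ x.1 x.2 ≤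
      (∑ i, Φ i []) / 2 - (1 / 2) * ∑ i, (GapAux.L Φ i [] true + GapAux.L Φ i [] false) :=
    fun F => GapAux.finset_bound Φ hpos hharm F
  have hsummable : Summable (fun x : Fin N × List Bool => GapPhi Φ x.1 x.2) :=
    summable_of_sum_le (fun x => GapAux.gap_nonneg Φ hpos hharm x.1 x.2) hbound
  have htsum : (∑' x : Fin N × List Bool, GapPhi Φ x.1 x.2) ≤
      (∑ i, Φ i []) / 2 - (1 / 2) * ∑ i, (GapAux.L Φ i [] true + GapAux.L Φ i [] false) :=
    Summable.tsum_le_of_sum_le hsummable hbound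
  have hlim : ∀ (i : Fin N) (b : Bool),
      limUnder atTop (fun n : ℕ => Φ i (List.replicate n b)) = GapAux.L Φ i [] b := by
    intro i b
    have h := GapAux.lim_eq Φ hpos hharm i [] b
    simpa using h
  simp only [hlim]
  linarith [htsum]
end
end

section
/- Let μ be any finite Borel measure on the path space Fin N × (ℕ → Bool) satisfying μ(Cyl(i,w)) = Φ i w for every edge (i, w). Then the measure of the set Q of rational paths equals twice the total gap, μ(Q) = 2 ( ∑_{i, w} Gap_Φ(i,w) + (1/2) ∑_{i} ( lim_n Φ i (List.replicate n true) + lim_n Φ i (List.replicate n false) ) ), and consequently the measure of the set of irrational paths equals 2·Error(Φ). -/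
/-!
Every rational path is, in exactly one way, one of the two boundary paths of a complementary
region: the region labelled by an edge `(i, w)` is bounded by `(i, w 0 1^∞)` and `(i, w 1 0^∞)`,
the root region of tree `i` by `(i, 0^∞)` and `(i, 1^∞)`. By continuity from above along the
nested cylinders `Cyl (i, u cⁿ)`, the singleton `{(i, u c^∞)}` has measure `lim_n Φ i (u cⁿ)`.
Summing over the countably many rational paths gives twice the total gap, and the irrational
paths carry the rest of `μ univ = ∑ i, Φ i []`.
-/

noncomputable section
open Filter Topology MeasureTheory

/-- The cylinder of an edge `(i, w)`. -/
def Cyl (N : ℕ) (i : Fin N) (w : List Bool) : Set (Fin N × (ℕ → Bool)) :=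
  {p | p.1 = i ∧ ∀ k : Fin w.length, p.2 k = w.get k}

/-- The set of rational paths: those whose Boolean sequence is eventually constant. -/
def RationalSet (N : ℕ) : Set (Fin N × (ℕ → Bool)) :=
  {p | ∃ (c : Bool) (m : ℕ), ∀ n ≥ m, p.2 n = c}

/-- The total gap `Gap(Φ)`: the sum of `Gap_Φ` over all edge-labelled complementary
regions plus the contribution of the `N` root regions. -/
def TotalGap {N : ℕ} (Φ : Fin N → List Bool → ℝ) : ℝ :=
  (∑' x : Fin N × List Bool, GapPhi Φ x.1 x.2) +
    (1/2) * ∑ i : Fin N,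
      (limUnder atTop (fun n : ℕ => Φ i (List.replicate n true)) +
       limUnder atTop (fun n : ℕ => Φ i (List.replicate n false)))

def rayPath (w : List Bool) (c : Bool) : ℕ → Bool := fun k => w.getD k c

section rayPath
variable {w : List Bool} {c : Bool} {k : ℕ}

lemma rayPath_of_lt (h : k < w.length) : rayPath w c k = w[k] := List.getD_eq_getElem _ _ h

lemma rayPath_of_le (h : w.length ≤ k) : rayPath w c k = c := List.getD_eq_default _ _ h

lemma rayPath_append_replicate (w : List Bool) (c : Bool) (n : ℕ) :
    rayPath (w ++ List.replicate n c) c = rayPath w c := by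
  funext k
  simp only [rayPath, List.getD_eq_getElem?_getD, List.getElem?_append, List.getElem?_replicate]
  split_ifs <;> simp_all

lemma rayPath_ofFn_of_forall_ge {s : ℕ → Bool} {m : ℕ} (h : ∀ n ≥ m, s n = c) :
    rayPath (List.ofFn fun k : Fin m => s k) c = s := by
  funext k
  rcases lt_or_ge k m with hk | hk
  · rw [rayPath_of_lt (by simpa using hk)]; simp
  · rw [rayPath_of_le (by simpa using hk), h k hk]

lemma length_le_of_rayPath_eq {u v : List Bool} (hv : v.getLast? ≠ some c)
    (h : rayPath u c = rayPath v c) : v.length ≤ u.length := by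
  by_contra! hlt
  have hlast : v.length - 1 < v.length := by omega
  apply hv
  rw [List.getLast?_eq_getElem?, List.getElem?_eq_getElem hlast, ← rayPath_of_lt hlast,
    ← h, rayPath_of_le (by omega)]

lemma eq_of_rayPath_eq {u v : List Bool} (hu : u.getLast? ≠ some c) (hv : v.getLast? ≠ some c)
    (h : rayPath u c = rayPath v c) : u = v := by
  have hlen := le_antisymm (length_le_of_rayPath_eq hu h.symm) (length_le_of_rayPath_eq hv h)
  refine List.ext_getElem hlen fun k hu' hv' => ?_
  rw [← rayPath_of_lt hu', ← rayPath_of_lt hv', h]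

end rayPath

section Cylinders
variable {N : ℕ} {i : Fin N} {w : List Bool} {c : Bool}

lemma mem_cyl_iff {p : Fin N × (ℕ → Bool)} (c : Bool) :
    p ∈ Cyl N i w ↔ p.1 = i ∧ ∀ k < w.length, p.2 k = rayPath w c k := by
  simp only [Cyl, Set.mem_ofPred_eq, Fin.forall_iff, List.get_eq_getElem]
  refine and_congr_right fun _ => forall₂_congr fun k hk => ?_
  rw [rayPath_of_lt hk]

lemma mem_cyl_append_replicate_iff {p : Fin N × (ℕ → Bool)} {n : ℕ} :
    p ∈ Cyl N i (w ++ List.replicate n c) ↔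
      p.1 = i ∧ ∀ k < w.length + n, p.2 k = rayPath w c k := by
  rw [mem_cyl_iff c, rayPath_append_replicate, List.length_append, List.length_replicate]

lemma measurableSet_cyl (N : ℕ) (i : Fin N) (w : List Bool) : MeasurableSet (Cyl N i w) := by
  unfold Cyl; measurability

lemma antitone_cyl_append_replicate (i : Fin N) (w : List Bool) (c : Bool) :
    Antitone fun n => Cyl N i (w ++ List.replicate n c) := fun m n hmn p hp => by
  rw [mem_cyl_append_replicate_iff] at hp ⊢
  exact ⟨hp.1, fun k hk => hp.2 k (by omega)⟩

lemma iInter_cyl_append_replicate (i : Fin N) (w : List Bool) (c : Bool) :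
    ⋂ n, Cyl N i (w ++ List.replicate n c) = {(i, rayPath w c)} := by
  ext p
  simp only [Set.mem_iInter, Set.mem_singleton_iff, mem_cyl_append_replicate_iff]
  constructor
  · intro h
    exact Prod.ext (h 0).1 (funext fun k => (h (k + 1)).2 k (by omega))
  · rintro rfl
    exact fun _ => ⟨rfl, fun _ _ => rfl⟩

lemma tendsto_measure_cyl_append_replicate (μ : Measure (Fin N × (ℕ → Bool))) [IsFiniteMeasure μ]
    (i : Fin N) (w : List Bool) (c : Bool) :
    Tendsto (fun n => μ (Cyl N i (w ++ List.replicate n c))) atTop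
      (𝓝 (μ {(i, rayPath w c)})) := by
  rw [← iInter_cyl_append_replicate]
  exact tendsto_measure_iInter_atTop (fun n => (measurableSet_cyl N i _).nullMeasurableSet)
    (antitone_cyl_append_replicate i w c) ⟨0, measure_ne_top μ _⟩

end Cylinders

def rayLimit {N : ℕ} (Φ : Fin N → List Bool → ℝ) (i : Fin N) (w : List Bool) (c : Bool) : ℝ :=
  limUnder atTop fun n => Φ i (w ++ List.replicate n c)

section rayLimit
variable {N : ℕ} {Φ : Fin N → List Bool → ℝ} {μ : Measure (Fin N × (ℕ → Bool))}
  [IsFiniteMeasure μ]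

lemma rayLimit_eq_toReal_measure (hΦ : ∀ i w, 0 ≤ Φ i w)
    (hμ : ∀ i w, μ (Cyl N i w) = ENNReal.ofReal (Φ i w)) (i : Fin N) (w : List Bool) (c : Bool) :
    rayLimit Φ i w c = (μ {(i, rayPath w c)}).toReal := by
  refine Tendsto.limUnder_eq ?_
  have h := (ENNReal.tendsto_toReal (measure_ne_top μ _)).comp
    (tendsto_measure_cyl_append_replicate μ i w c)
  refine h.congr fun n => ?_
  simp [hμ, ENNReal.toReal_ofReal (hΦ _ _)]

lemma rayLimit_nonneg (hΦ : ∀ i w, 0 ≤ Φ i w)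
    (hμ : ∀ i w, μ (Cyl N i w) = ENNReal.ofReal (Φ i w)) (i : Fin N) (w : List Bool) (c : Bool) :
    0 ≤ rayLimit Φ i w c :=
  rayLimit_eq_toReal_measure hΦ hμ i w c ▸ ENNReal.toReal_nonneg

lemma measure_singleton_rayPath (hΦ : ∀ i w, 0 ≤ Φ i w)
    (hμ : ∀ i w, μ (Cyl N i w) = ENNReal.ofReal (Φ i w)) (i : Fin N) (w : List Bool) (c : Bool) :
    μ {(i, rayPath w c)} = ENNReal.ofReal (rayLimit Φ i w c) := by
  rw [rayLimit_eq_toReal_measure hΦ hμ, ENNReal.ofReal_toReal (measure_ne_top μ _)]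

end rayLimit

/-- The complementary region labelled by the edge `(i, w)` (`inl`) or the root region of tree
`i` (`inr`). Its boundary path `boundaryPath r c` is the one that is eventually `c`; its `stem`
never ends in `c`, which is what makes boundary paths distinct. -/
abbrev Region (N : ℕ) := Fin N × List Bool ⊕ Fin N

namespace Region
variable {N : ℕ}

def tree : Region N → Fin N
  | .inl x => x.1
  | .inr i => i

def stem : Region N → Bool → List Bool
  | .inl x, c => x.2 ++ [!c]
  | .inr _, _ => []

def boundaryPath (r : Region N) (c : Bool) : Fin N × (ℕ → Bool) :=
  (r.tree, rayPath (r.stem c) c)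

def gap (Φ : Fin N → List Bool → ℝ) : Region N → ℝ
  | .inl x => GapPhi Φ x.1 x.2
  | .inr i => (rayLimit Φ i [] true + rayLimit Φ i [] false) / 2

lemma two_mul_gap (Φ : Fin N → List Bool → ℝ) (r : Region N) :
    2 * r.gap Φ = ∑ c, rayLimit Φ r.tree (r.stem c) c := by
  rcases r with x | i <;> simp only [gap, GapPhi] <;>
    rw [mul_div_cancel₀ _ two_ne_zero, Fintype.sum_bool] <;> rfl

lemma tsum_gap {Φ : Fin N → List Bool → ℝ} (h : Summable (gap Φ)) :
    ∑' r : Region N, r.gap Φ = TotalGap Φ := by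
  rw [Summable.tsum_sum (h.comp_injective Sum.inl_injective) (h.comp_injective Sum.inr_injective),
    tsum_fintype (f := fun i => gap Φ (.inr i)), TotalGap, Finset.mul_sum]
  congr 1
  refine Finset.sum_congr rfl fun i _ => ?_
  simp only [gap, rayLimit, List.nil_append]
  ring

lemma getLast?_stem_ne (r : Region N) (c : Bool) : (r.stem c).getLast? ≠ some c := by
  rcases r with x | i <;> simp [stem]

lemma boundaryPath_injective : Function.Injective (Function.uncurry (boundaryPath (N := N))) := by
  rintro ⟨r, c⟩ ⟨r', c'⟩ h
  simp only [Function.uncurry_apply_pair, boundaryPath, Prod.mk.injEq] at h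
  obtain ⟨htree, hpath⟩ := h
  have hc : c = c' := by
    have := congrFun hpath ((r.stem c).length + (r'.stem c').length)
    rwa [rayPath_of_le (by omega), rayPath_of_le (by omega)] at this
  subst hc
  have hstem := eq_of_rayPath_eq (getLast?_stem_ne r c) (getLast?_stem_ne r' c) hpath
  rcases r with ⟨i, w⟩ | i <;> rcases r' with ⟨i', w'⟩ | i' <;>
    simp_all [tree, stem]

lemma range_boundaryPath :
    Set.range (Function.uncurry (boundaryPath (N := N))) = RationalSet N := by
  ext ⟨i, s⟩
  constructor
  · rintro ⟨⟨r, c⟩, h⟩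
    simp only [Function.uncurry_apply_pair, boundaryPath, Prod.mk.injEq] at h
    exact ⟨c, (r.stem c).length, fun n hn => h.2 ▸ rayPath_of_le hn⟩
  · rintro ⟨c, m, hm⟩
    induction m with
    | zero => exact ⟨(.inr i, c), Prod.ext rfl (rayPath_ofFn_of_forall_ge (m := 0) hm)⟩
    | succ m ih =>
      by_cases hsm : s m = c
      · exact ih fun n hn => (Nat.eq_or_lt_of_le hn).elim (· ▸ hsm) (hm n)
      · refine ⟨(.inl (i, List.ofFn fun k : Fin m => s k), c), Prod.ext rfl ?_⟩
        have hstem :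
            List.ofFn (fun k : Fin m => s k) ++ [!c] = List.ofFn fun k : Fin (m + 1) => s k := by
          simp only [List.ofFn_succ', List.concat_eq_append, Fin.val_castSucc, Fin.val_last,
            Bool.eq_not.mpr hsm]
        simp only [Function.uncurry_apply_pair, boundaryPath, tree, stem, hstem]
        exact rayPath_ofFn_of_forall_ge hm

end Region

lemma measure_range_eq_tsum {α ι : Type*} [MeasurableSpace α] [MeasurableSingletonClass α]
    [Countable ι] (μ : Measure α) {f : ι → α} (hf : Function.Injective f) :
    μ (Set.range f) = ∑' x, μ {f x} := by
  rw [← Set.iUnion_singleton_eq_range]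
  exact measure_iUnion (fun x y hxy => Set.disjoint_singleton.mpr (hf.ne hxy))
    fun _ => measurableSet_singleton _

section Measure
variable {N : ℕ} {Φ : Fin N → List Bool → ℝ} {μ : Measure (Fin N × (ℕ → Bool))}

lemma measurableSet_rationalSet (N : ℕ) : MeasurableSet (RationalSet N) :=
  Region.range_boundaryPath ▸ (Set.countable_range _).measurableSet

lemma measure_univ_eq_ofReal_sum (hΦ : ∀ i w, 0 ≤ Φ i w)
    (hμ : ∀ i w, μ (Cyl N i w) = ENNReal.ofReal (Φ i w)) :
    μ Set.univ = ENNReal.ofReal (∑ i, Φ i []) := by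
  have huniv : Set.univ = ⋃ i, Cyl N i [] := by
    ext p; simp [Cyl]
  have hdisj : Pairwise (Function.onFun Disjoint fun i => Cyl N i []) := fun i j hij =>
    Set.disjoint_left.mpr fun p hi hj => hij (hi.1.symm.trans hj.1)
  rw [huniv, measure_iUnion hdisj fun i => measurableSet_cyl N i [], tsum_fintype,
    ENNReal.ofReal_sum_of_nonneg fun i _ => hΦ i []]
  simp only [hμ]

variable [IsFiniteMeasure μ]

lemma Region.gap_nonneg (hΦ : ∀ i w, 0 ≤ Φ i w)
    (hμ : ∀ i w, μ (Cyl N i w) = ENNReal.ofReal (Φ i w)) (r : Region N) : 0 ≤ r.gap Φ := by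
  have : 0 ≤ 2 * r.gap Φ :=
    two_mul_gap Φ r ▸ Finset.sum_nonneg fun c _ => rayLimit_nonneg hΦ hμ _ _ c
  linarith

lemma totalGap_nonneg (hΦ : ∀ i w, 0 ≤ Φ i w)
    (hμ : ∀ i w, μ (Cyl N i w) = ENNReal.ofReal (Φ i w)) : 0 ≤ TotalGap Φ := by
  have hgap := Region.gap_nonneg hΦ hμ
  refine add_nonneg (tsum_nonneg fun x => hgap (.inl x)) <|
    mul_nonneg (by norm_num) <| Finset.sum_nonneg fun i _ => ?_
  have hroot := hgap (.inr i)
  simp only [Region.gap, rayLimit, List.nil_append] at hroot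
  linarith

lemma measure_rationalSet (hΦ : ∀ i w, 0 ≤ Φ i w)
    (hμ : ∀ i w, μ (Cyl N i w) = ENNReal.ofReal (Φ i w)) :
    μ (RationalSet N) = ENNReal.ofReal (2 * TotalGap Φ) := by
  have hregion : ∀ r : Region N, ∑' c, μ {r.boundaryPath c} = ENNReal.ofReal (2 * r.gap Φ) := by
    intro r
    rw [Region.two_mul_gap, ENNReal.ofReal_sum_of_nonneg fun c _ => rayLimit_nonneg hΦ hμ _ _ c,
      tsum_fintype]
    exact Finset.sum_congr rfl fun c _ => measure_singleton_rayPath hΦ hμ _ _ c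
  have hsum : μ (RationalSet N) = ∑' r : Region N, ENNReal.ofReal (2 * r.gap Φ) := by
    rw [← Region.range_boundaryPath, measure_range_eq_tsum μ Region.boundaryPath_injective,
      ENNReal.tsum_prod']
    exact tsum_congr hregion
  have hnonneg : ∀ r : Region N, 0 ≤ 2 * r.gap Φ := fun r =>
    mul_nonneg zero_le_two (Region.gap_nonneg hΦ hμ r)
  have hsummable : Summable fun r : Region N => 2 * r.gap Φ :=
    (ENNReal.summable_toReal (hsum ▸ measure_ne_top μ _)).congr fun r =>
      ENNReal.toReal_ofReal (hnonneg r)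
  rw [hsum, ← ENNReal.ofReal_tsum_of_nonneg hnonneg hsummable, tsum_mul_left,
    Region.tsum_gap ((summable_mul_left_iff two_ne_zero).mp hsummable)]

end Measure

theorem measure_rational_irrational_general (N : ℕ)
    (Φ : Fin N → List Bool → ℝ)
    (hpos : ∀ (i : Fin N) (w : List Bool), 0 < Φ i w)
    (μ : Measure (Fin N × (ℕ → Bool))) [IsFiniteMeasure μ]
    (hμ : ∀ (i : Fin N) (w : List Bool), μ (Cyl N i w) = ENNReal.ofReal (Φ i w)) :
    μ (RationalSet N) = ENNReal.ofReal (2 * TotalGap Φ) ∧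
    μ (RationalSet N)ᶜ =
      ENNReal.ofReal (2 * ((∑ i : Fin N, Φ i []) / 2 - TotalGap Φ)) := by
  have hΦ : ∀ i w, 0 ≤ Φ i w := fun i w => (hpos i w).le
  have hQ := measure_rationalSet hΦ hμ
  refine ⟨hQ, ?_⟩
  have hgap := totalGap_nonneg hΦ hμ
  rw [measure_compl (measurableSet_rationalSet N) (measure_ne_top μ _),
    measure_univ_eq_ofReal_sum hΦ hμ, hQ, ← ENNReal.ofReal_sub _ (by positivity)]
  ring_nf

/-- **Measure of rational and irrational paths.** If `μ` is a finite Borel measure on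
the path space with `μ (Cyl (i,w)) = Φ i w` for every edge `(i,w)`, then the set `Q` of
rational paths has measure `2 · Gap(Φ)` and the set of irrational paths has measure
`2 · Error(Φ)` where `Error(Φ) = ∂Φ/2 − Gap(Φ)`. -/
theorem measure_rational_irrational (N : ℕ) (hN : 1 ≤ N)
    (Φ : Fin N → List Bool → ℝ)
    (hpos : ∀ (i : Fin N) (w : List Bool), 0 < Φ i w)
    (hharm : ∀ (i : Fin N) (w : List Bool), Φ i w = Φ i (w ++ [false]) + Φ i (w ++ [true]))
    (μ : Measure (Fin N × (ℕ → Bool))) [IsFiniteMeasure μ]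
    (hμ : ∀ (i : Fin N) (w : List Bool), μ (Cyl N i w) = ENNReal.ofReal (Φ i w)) :
    μ (RationalSet N) = ENNReal.ofReal (2 * TotalGap Φ) ∧
    μ (RationalSet N)ᶜ =
      ENNReal.ofReal (2 * ((∑ i : Fin N, Φ i []) / 2 - TotalGap Φ)) :=
  measure_rational_irrational_general N Φ hpos μ hμ
end
end

section
/- (Finite gap identity from the Green formula.) For every positive harmonic 1-form Φ and every integer n ≥ 1: (1/2) ∑_{i : Fin N} ( Φ i (List.replicate n false) + Φ i (List.replicate n true) ) + ∑_{i : Fin N} ∑_{w : List Bool, w.length ≤ n−2} (1/2) ( Φ i (w ++ [true] ++ List.replicate (n−1−w.length) false) + Φ i (w ++ [false] ++ List.replicate (n−1−w.length) true) ) = ∂Φ / 2. -/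
noncomputable section
open Filter Topology

private lemma gap_key (N : ℕ) (Φ : Fin N → List Bool → ℝ)
    (hharm : ∀ (i : Fin N) (w : List Bool), Φ i w = Φ i (w ++ [false]) + Φ i (w ++ [true]))
    (i : Fin N) :
    ∀ n : ℕ, ∀ w : List Bool,
      Φ i w = Φ i (w ++ List.replicate (n + 1) false) + Φ i (w ++ List.replicate (n + 1) true) +
        ∑ m ∈ Finset.range n, ∑ v : Fin m → Bool,
          (Φ i (w ++ List.ofFn v ++ [true] ++ List.replicate (n - m) false) +
           Φ i (w ++ List.ofFn v ++ [false] ++ List.replicate (n - m) true)) := by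
  intro n
  induction n with
  | zero =>
    intro w
    simp [hharm i w]
  | succ n ih =>
    intro w
    rw [Finset.sum_range_succ']
    have h0 : ∑ v : Fin 0 → Bool,
        (Φ i (w ++ List.ofFn v ++ [true] ++ List.replicate (n + 1 - 0) false) +
         Φ i (w ++ List.ofFn v ++ [false] ++ List.replicate (n + 1 - 0) true)) =
        Φ i ((w ++ [true]) ++ List.replicate (n + 1) false) +
        Φ i ((w ++ [false]) ++ List.replicate (n + 1) true) := by
      simp
    have hsplit : ∀ m : ℕ, ∑ v : Fin (m + 1) → Bool,
        (Φ i (w ++ List.ofFn v ++ [true] ++ List.replicate (n + 1 - (m + 1)) false) +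
         Φ i (w ++ List.ofFn v ++ [false] ++ List.replicate (n + 1 - (m + 1)) true)) =
        (∑ v : Fin m → Bool,
          (Φ i ((w ++ [false]) ++ List.ofFn v ++ [true] ++ List.replicate (n - m) false) +
           Φ i ((w ++ [false]) ++ List.ofFn v ++ [false] ++ List.replicate (n - m) true))) +
        (∑ v : Fin m → Bool,
          (Φ i ((w ++ [true]) ++ List.ofFn v ++ [true] ++ List.replicate (n - m) false) +
           Φ i ((w ++ [true]) ++ List.ofFn v ++ [false] ++ List.replicate (n - m) true))) := by
      intro m
      rw [← (Fin.consEquiv (fun _ : Fin (m + 1) => Bool)).sum_comp]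
      rw [Fintype.sum_prod_type]
      rw [Fintype.sum_bool]
      have hofn : ∀ (b : Bool) (v : Fin m → Bool),
          List.ofFn (Fin.consEquiv (fun _ : Fin (m+1) => Bool) (b, v)) = b :: List.ofFn v := by
        intro b v
        simp [Fin.consEquiv, List.ofFn_succ, Fin.cons_succ]
      simp only [hofn]
      have : n + 1 - (m + 1) = n - m := by omega
      rw [this]
      rw [add_comm]
      congr 1 <;> { apply Finset.sum_congr rfl; intro v _; simp }
    simp only [hsplit, h0]
    rw [Finset.sum_add_distrib]
    have hrepf : w ++ List.replicate (n + 1 + 1) false = (w ++ [false]) ++ List.replicate (n+1) false := by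
      simp [List.replicate_succ]
    have hrept : w ++ List.replicate (n + 1 + 1) true = (w ++ [true]) ++ List.replicate (n+1) true := by
      simp [List.replicate_succ]
    rw [hrepf, hrept]
    rw [hharm i w, ih (w ++ [false]), ih (w ++ [true])]
    ring

/-- **Finite gap identity from the Green formula.** For every positive harmonic 1-form
`Φ` and every `n ≥ 1`, half the sum over the two extreme edges at depth `n` of each of
the `N` root regions, plus the finite approximate gaps `Gap^{n-1-|w|}` of all the
edge-labelled complementary regions `(i, w)` with `|w| ≤ n - 2`, equals `∂Φ / 2`.
Words of length `m` are parametrized by functions `Fin m → Bool` via `List.ofFn`. -/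
theorem finite_gap_identity (N : ℕ) (hN : 1 ≤ N) (Φ : Fin N → List Bool → ℝ)
    (hpos : ∀ (i : Fin N) (w : List Bool), 0 < Φ i w)
    (hharm : ∀ (i : Fin N) (w : List Bool), Φ i w = Φ i (w ++ [false]) + Φ i (w ++ [true]))
    (n : ℕ) (hn : 1 ≤ n) :
    (1/2) * (∑ i : Fin N, (Φ i (List.replicate n false) + Φ i (List.replicate n true))) +
      ∑ i : Fin N, ∑ m ∈ Finset.range (n - 1), ∑ v : Fin m → Bool,
        (1/2) * (Φ i (List.ofFn v ++ [true] ++ List.replicate (n - 1 - m) false) +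
                 Φ i (List.ofFn v ++ [false] ++ List.replicate (n - 1 - m) true))
    = (∑ i : Fin N, Φ i []) / 2 := by
  obtain ⟨k, rfl⟩ : ∃ k, n = k + 1 := ⟨n - 1, by omega⟩
  have hkey : ∀ i : Fin N,
      Φ i [] = Φ i (List.replicate (k + 1) false) + Φ i (List.replicate (k + 1) true) +
        ∑ m ∈ Finset.range k, ∑ v : Fin m → Bool,
          (Φ i (List.ofFn v ++ [true] ++ List.replicate (k - m) false) +
           Φ i (List.ofFn v ++ [false] ++ List.replicate (k - m) true)) := by
    intro i
    simpa using gap_key N Φ hharm i k []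
  have hk1 : k + 1 - 1 = k := by omega
  simp only [hk1]
  rw [Finset.mul_sum, ← Finset.sum_add_distrib, Finset.sum_div]
  apply Finset.sum_congr rfl
  intro i _
  simp only [← Finset.mul_sum]
  rw [hkey i]
  ring
end
end

section
/- If (p_k) is a strictly increasing sequence of paths converging to a path p (convergence meaning: for every m there is K such that for all k ≥ K, p_k has the same first coordinate as p and its Boolean sequence agrees with that of p on 0, 1, …, m), then Φ_∞(p_k) → 0 as k → ∞. -/
noncomputable section
open Filter Topology

/-- The word `[s 0, …, s (m-1)]` of length `m`. -/
def word (s : ℕ → Bool) (m : ℕ) : List Bool := List.ofFn (fun k : Fin m => s k.val)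

/-- `Φ_∞(p) = lim_n Φ(p^n)` (the limit exists since the sequence is positive
and decreasing). -/
def PhiInf {N : ℕ} (Φ : Fin N → List Bool → ℝ) (p : Fin N × (ℕ → Bool)) : ℝ :=
  limUnder atTop (fun m => Φ p.1 (word p.2 m))

/-- A sequence of paths converges to `p = (i, s)` if for every `m` the paths eventually
have first coordinate `i` and Boolean sequence agreeing with `s` on `0, 1, …, m`. -/
def PathTendsto {N : ℕ} (pk : ℕ → Fin N × (ℕ → Bool)) (p : Fin N × (ℕ → Bool)) : Prop :=
  ∀ m : ℕ, ∃ K : ℕ, ∀ k ≥ K, (pk k).1 = p.1 ∧ ∀ l ≤ m, (pk k).2 l = p.2 l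

lemma word_succ (s : ℕ → Bool) (m : ℕ) : word s (m + 1) = word s m ++ [s m] := by
  rw [word, word, List.ofFn_succ', List.concat_eq_append]
  simp [Fin.coe_castSucc]

lemma word_congr {s t : ℕ → Bool} {m : ℕ} (h : ∀ l < m, s l = t l) : word s m = word t m := by
  unfold word
  congr 1
  funext k
  exact h k k.isLt

section aux
variable {N : ℕ} {Φ : Fin N → List Bool → ℝ}

lemma phi_anti (hpos : ∀ (i : Fin N) (w : List Bool), 0 < Φ i w)
    (hharm : ∀ (i : Fin N) (w : List Bool), Φ i w = Φ i (w ++ [false]) + Φ i (w ++ [true])) (i : Fin N) (s : ℕ → Bool) : Antitone (fun m => Φ i (word s m)) := by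
  apply antitone_nat_of_succ_le
  intro m
  simp only [word_succ, hharm i (word s m)]
  cases h : s m
  · linarith [hpos i (word s m ++ [true])]
  · linarith [hpos i (word s m ++ [false])]

lemma phi_bdd (hpos : ∀ (i : Fin N) (w : List Bool), 0 < Φ i w) (i : Fin N) (s : ℕ → Bool) :
    BddBelow (Set.range fun m => Φ i (word s m)) := by
  refine ⟨0, ?_⟩
  rintro x ⟨m, rfl⟩
  exact (hpos i _).le

lemma phi_tendsto (hpos : ∀ (i : Fin N) (w : List Bool), 0 < Φ i w)
    (hharm : ∀ (i : Fin N) (w : List Bool), Φ i w = Φ i (w ++ [false]) + Φ i (w ++ [true])) (i : Fin N) (s : ℕ → Bool) :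
    Tendsto (fun m => Φ i (word s m)) atTop (nhds (⨅ m, Φ i (word s m))) :=
  tendsto_atTop_ciInf (phi_anti hpos hharm i s) (phi_bdd hpos i s)

lemma phiInf_eq (hpos : ∀ (i : Fin N) (w : List Bool), 0 < Φ i w)
    (hharm : ∀ (i : Fin N) (w : List Bool), Φ i w = Φ i (w ++ [false]) + Φ i (w ++ [true])) (p : Fin N × (ℕ → Bool)) :
    PhiInf Φ p = ⨅ m, Φ p.1 (word p.2 m) :=
  (phi_tendsto hpos hharm p.1 p.2).limUnder_eq

lemma phiInf_nonneg (hpos : ∀ (i : Fin N) (w : List Bool), 0 < Φ i w)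
    (hharm : ∀ (i : Fin N) (w : List Bool), Φ i w = Φ i (w ++ [false]) + Φ i (w ++ [true])) (p : Fin N × (ℕ → Bool)) : 0 ≤ PhiInf Φ p := by
  rw [phiInf_eq hpos hharm]
  exact le_ciInf fun m => (hpos _ _).le

lemma phiInf_le (hpos : ∀ (i : Fin N) (w : List Bool), 0 < Φ i w)
    (hharm : ∀ (i : Fin N) (w : List Bool), Φ i w = Φ i (w ++ [false]) + Φ i (w ++ [true])) (p : Fin N × (ℕ → Bool)) (m : ℕ) : PhiInf Φ p ≤ Φ p.1 (word p.2 m) := by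
  rw [phiInf_eq hpos hharm]
  exact ciInf_le (phi_bdd hpos p.1 p.2) m

end aux

lemma pathLt_trans {N : ℕ} {p q r : Fin N × (ℕ → Bool)}
    (h1 : PathLt p q) (h2 : PathLt q r) : PathLt p r := by
  rcases h1 with h1 | ⟨e1, n1, ha1, hp1, hq1⟩
  · rcases h2 with h2 | ⟨e2, _⟩
    · exact Or.inl (h1.trans h2)
    · exact Or.inl (e2 ▸ h1)
  · rcases h2 with h2 | ⟨e2, n2, ha2, hq2, hr2⟩
    · exact Or.inl (e1 ▸ h2)
    · refine Or.inr ⟨e1.trans e2, ?_⟩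
      rcases lt_trichotomy n1 n2 with h | h | h
      · exact ⟨n1, fun k hk => (ha1 k hk).trans (ha2 k (hk.trans h)), hp1,
          (ha2 n1 h).symm.trans hq1⟩
      · subst h; rw [hq1] at hq2; exact absurd hq2 (by simp)
      · exact ⟨n2, fun k hk => (ha1 k (hk.trans h)).trans (ha2 k hk),
          (ha1 n2 h).trans hq2, hr2⟩

lemma pathLt_trichotomy {N : ℕ} (p q : Fin N × (ℕ → Bool)) :
    PathLt p q ∨ p = q ∨ PathLt q p := by
  rcases lt_trichotomy p.1 q.1 with h | h | h
  · exact Or.inl (Or.inl h)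
  · by_cases hs : p.2 = q.2
    · exact Or.inr (Or.inl (Prod.ext h hs))
    · have hex : ∃ n, p.2 n ≠ q.2 n := Function.ne_iff.mp hs
      have hn : p.2 (Nat.find hex) ≠ q.2 (Nat.find hex) := Nat.find_spec hex
      have hlt : ∀ k < Nat.find hex, p.2 k = q.2 k :=
        fun k hk => not_not.mp (Nat.find_min hex hk)
      cases hp : p.2 (Nat.find hex) <;> cases hq : q.2 (Nat.find hex)
      · rw [hp, hq] at hn; exact absurd rfl hn
      · exact Or.inl (Or.inr ⟨h, Nat.find hex, hlt, hp, hq⟩)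
      · exact Or.inr (Or.inr (Or.inr ⟨h.symm, Nat.find hex,
          fun k hk => (hlt k hk).symm, hq, hp⟩))
      · rw [hp, hq] at hn; exact absurd rfl hn
  · exact Or.inr (Or.inr (Or.inl h))

/-- **Vanishing of `Φ_∞` along increasing sequences.** If `(p_k)` is a strictly
increasing sequence of paths converging to a path `p`, then `Φ_∞(p_k) → 0`. -/
theorem phi_infty_tendsto_zero (N : ℕ) (hN : 1 ≤ N) (Φ : Fin N → List Bool → ℝ)
    (hpos : ∀ (i : Fin N) (w : List Bool), 0 < Φ i w)
    (hharm : ∀ (i : Fin N) (w : List Bool), Φ i w = Φ i (w ++ [false]) + Φ i (w ++ [true]))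
    (p : Fin N × (ℕ → Bool)) (pk : ℕ → Fin N × (ℕ → Bool))
    (hmono : ∀ k, PathLt (pk k) (pk (k + 1))) (hconv : PathTendsto pk p) :
    Tendsto (fun k => PhiInf Φ (pk k)) atTop (nhds 0) := by
  -- strict monotonicity of the whole sequence
  have hsm : ∀ j k, j < k → PathLt (pk j) (pk k) := by
    intro j k h
    induction k with
    | zero => omega
    | succ k ih =>
      rcases Nat.lt_succ_iff_lt_or_eq.mp h with h | rfl
      · exact pathLt_trans (ih h) (hmono k)
      · exact hmono j
  -- no term is above p
  have hne : ∀ j, ¬ PathLt p (pk j) := by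
    intro j hj
    rcases hj with hj | ⟨e, n, ha, hpn, hjn⟩
    · obtain ⟨K, hK⟩ := hconv 0
      have h1 := (hK (max K (j + 1)) (le_max_left _ _)).1
      have h2 := hsm j (max K (j + 1)) (lt_of_lt_of_le (Nat.lt_succ_self j) (le_max_right _ _))
      rcases h2 with h2 | ⟨e2, _⟩
      · rw [h1] at h2; exact absurd (hj.trans h2) (lt_irrefl _)
      · rw [e2, h1] at hj; exact absurd hj (lt_irrefl _)
    · obtain ⟨K, hK⟩ := hconv n
      have h1 := hK (max K (j + 1)) (le_max_left _ _)
      have h2 := hsm j (max K (j + 1)) (lt_of_lt_of_le (Nat.lt_succ_self j) (le_max_right _ _))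
      rcases h2 with h2 | ⟨e2, n', ha', hj', hk'⟩
      · rw [← e, h1.1] at h2; exact absurd h2 (lt_irrefl _)
      · rcases lt_trichotomy n' n with h | h | h
        · have hA : p.2 n' = false := (ha n' h).trans hj'
          have hB : (pk (max K (j + 1))).2 n' = p.2 n' := h1.2 n' h.le
          rw [hk', hA] at hB
          exact absurd hB (by simp)
        · subst h; rw [hjn] at hj'; exact absurd hj' (by simp)
        · have hA : (pk j).2 n = (pk (max K (j + 1))).2 n := ha' n h
          have hB : (pk (max K (j + 1))).2 n = p.2 n := h1.2 n le_rfl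
          rw [hjn, hpn] at *
          rw [hjn] at hA
          rw [hpn] at hB
          rw [hB] at hA
          exact absurd hA (by simp)
  -- every term is below p
  have hbelow : ∀ k, PathLt (pk k) p := by
    intro k
    rcases pathLt_trichotomy (pk k) p with h | h | h
    · exact h
    · exact absurd (h ▸ hmono k : PathLt p (pk (k + 1))) (hne (k + 1))
    · exact absurd h (hne k)
  -- epsilon argument
  rw [Metric.tendsto_atTop]
  intro ε hε
  have hc : CauchySeq (fun m => Φ p.1 (word p.2 m)) :=
    (phi_tendsto hpos hharm p.1 p.2).cauchySeq
  obtain ⟨M, hM⟩ := Metric.cauchySeq_iff'.mp hc (ε / 2) (by linarith)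
  obtain ⟨K, hK⟩ := hconv M
  refine ⟨K, fun k hk => ?_⟩
  have hK1 := (hK k hk).1
  have hK2 := (hK k hk).2
  rcases hbelow k with h | ⟨e, n, ha, hf, ht⟩
  · rw [hK1] at h; exact absurd h (lt_irrefl _)
  · have hnM : M < n := by
      by_contra hcon
      push_neg at hcon
      have := hK2 n hcon
      rw [hf, ht] at this
      exact absurd this (by simp)
    have h1 : PhiInf Φ (pk k) ≤ Φ (pk k).1 (word (pk k).2 (n + 1)) :=
      phiInf_le hpos hharm (pk k) (n + 1)
    have hw : word (pk k).2 (n + 1) = word p.2 n ++ [false] := by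
      rw [word_succ, hf, word_congr ha]
    have hw2 : word p.2 (n + 1) = word p.2 n ++ [true] := by rw [word_succ, ht]
    have hh := hharm p.1 (word p.2 n)
    rw [hK1, hw] at h1
    have key : PhiInf Φ (pk k) ≤ Φ p.1 (word p.2 n) - Φ p.1 (word p.2 (n + 1)) := by
      rw [hw2]; linarith
    have hd1 := hM n hnM.le
    have hd2 := hM (n + 1) (by omega)
    have hge : 0 ≤ PhiInf Φ (pk k) := phiInf_nonneg hpos hharm (pk k)
    rw [Real.dist_eq] at hd1 hd2 ⊢
    rw [sub_zero, abs_of_nonneg hge]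
    have e1 := abs_lt.mp hd1
    have e2 := abs_lt.mp hd2
    linarith [key, e1.1, e1.2, e2.1, e2.2]
end
end
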